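/- For every real p ≥ 1 and every odd integer q ≥ 3, the minimum length, measured in the p-norm, of a tour of the instance I_q (defined below) is at most 14 · q^{(p+1)q}. -/

import Mathlib

open Classical

/-- The `p`-norm distance between two points of `ℝ²`. -/
noncomputable def pdist (p : ℝ) (a b : ℝ × ℝ) : ℝ :=
  (|a.1 - b.1| ^ p + |a.2 - b.2| ^ p) ^ (1 / p)

/-- The `y`-coordinate `S(i) = ∑_{s=0}^{i−1} q^{(p+1)(q−s)−1}` of the `i`-th
layer of the instance `I_q`. -/
noncomputable def layerY (p : ℝ) (q i : ℕ) : ℝ :=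
  ∑ s ∈ Finset.range i, (q : ℝ) ^ ((p + 1) * ((q : ℝ) - (s : ℝ)) - 1)

/-- The quantity `q^{(p+1)q}`. -/
noncomputable def bigM (p : ℝ) (q : ℕ) : ℝ := (q : ℝ) ^ ((p + 1) * (q : ℝ))

/-- The spacing `q^{(p+1)(q−i)}` between consecutive points on layer `i`. -/
noncomputable def spacing (p : ℝ) (q i : ℕ) : ℝ :=
  (q : ℝ) ^ ((p + 1) * ((q : ℝ) - (i : ℝ)))

/-- The number `q^{(p+1)i}` of spacing intervals on layer `i`
(as a natural number). -/
noncomputable def numIntervals (p : ℝ) (q i : ℕ) : ℕ :=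
  Nat.floor ((q : ℝ) ^ ((p + 1) * (i : ℝ)))

/-- The vertical distance `q^{(p+1)(q−i)−1}` between layers `i` and `i+1`
(as a natural number). -/
noncomputable def gapCount (p : ℝ) (q i : ℕ) : ℕ :=
  Nat.floor ((q : ℝ) ^ ((p + 1) * ((q : ℝ) - (i : ℝ)) - 1))

/-- The vertex set `V₁` of the instance `I_q`. -/
noncomputable def V1 (p : ℝ) (q : ℕ) : Finset (ℝ × ℝ) :=
  (Finset.range (q + 1)).biUnion fun i =>
    (Finset.range (numIntervals p q i + 1)).image fun j =>
      ((j : ℝ) * spacing p q i, layerY p q i)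

/-- The vertex set `V₂` of the instance `I_q` (a copy of `V₁` shifted to the
right by `2q^{(p+1)q}`). -/
noncomputable def V2 (p : ℝ) (q : ℕ) : Finset (ℝ × ℝ) :=
  (Finset.range (q + 1)).biUnion fun i =>
    (Finset.range (numIntervals p q i + 1)).image fun j =>
      ((j : ℝ) * spacing p q i + 2 * bigM p q, layerY p q i)

/-- The vertex set `V₃` of the instance `I_q` (the unit-spaced points filling
the gap on the topmost layer). -/
noncomputable def V3 (p : ℝ) (q : ℕ) : Finset (ℝ × ℝ) :=
  (Finset.Icc 1 (Nat.floor (bigM p q) - 1)).image fun j =>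
    (bigM p q + (j : ℝ), layerY p q q)

/-- The vertex set `V₄` of the instance `I_q` (the unit-spaced points on the
vertical segments `h_i` and `h'_i`). -/
noncomputable def V4 (p : ℝ) (q : ℕ) : Finset (ℝ × ℝ) :=
  (Finset.range q).biUnion fun i =>
    (Finset.Icc 1 (gapCount p q i - 1)).biUnion fun j =>
      if Even i then
        {((0 : ℝ), (j : ℝ) + layerY p q i), (3 * bigM p q, (j : ℝ) + layerY p q i)}
      else
        {(bigM p q, (j : ℝ) + layerY p q i), (2 * bigM p q, (j : ℝ) + layerY p q i)}

/-- The vertex set of the instance `I_q`. -/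
noncomputable def VIq (p : ℝ) (q : ℕ) : Finset (ℝ × ℝ) :=
  V1 p q ∪ V2 p q ∪ V3 p q ∪ V4 p q

/-- The length (in the `p`-norm) of an undirected edge of `ℝ²`. -/
noncomputable def edgeLen (p : ℝ) : Sym2 (ℝ × ℝ) → ℝ :=
  Sym2.lift ⟨fun a b => pdist p a b, fun a b => by
    simp only [pdist]
    rw [abs_sub_comm a.1 b.1, abs_sub_comm a.2 b.2]⟩

/-- The edge set `E₁` of the tour `T` of `I_q`: the horizontal edges joining
consecutive points of `V₁` on each layer. -/
noncomputable def E1 (p : ℝ) (q : ℕ) : Finset (Sym2 (ℝ × ℝ)) :=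
  (Finset.range (q + 1)).biUnion fun i =>
    (Finset.range (numIntervals p q i)).image fun j =>
      s(((j : ℝ) * spacing p q i, layerY p q i),
        (((j : ℝ) + 1) * spacing p q i, layerY p q i))

/-- The edge set `E₂` of the tour `T` of `I_q`: the horizontal edges joining
consecutive points of `V₂` on each layer. -/
noncomputable def E2 (p : ℝ) (q : ℕ) : Finset (Sym2 (ℝ × ℝ)) :=
  (Finset.range (q + 1)).biUnion fun i =>
    (Finset.range (numIntervals p q i)).image fun j =>
      s(((j : ℝ) * spacing p q i + 2 * bigM p q, layerY p q i),
        (((j : ℝ) + 1) * spacing p q i + 2 * bigM p q, layerY p q i))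

/-- The edge set `E₃` of the tour `T` of `I_q`: the unit-length horizontal edges
on the topmost layer between `x = q^{(p+1)q}` and `x = 2q^{(p+1)q}`. -/
noncomputable def E3 (p : ℝ) (q : ℕ) : Finset (Sym2 (ℝ × ℝ)) :=
  (Finset.range (Nat.floor (bigM p q))).image fun j =>
    s((bigM p q + (j : ℝ), layerY p q q), (bigM p q + (j : ℝ) + 1, layerY p q q))

/-- The edge set `E₄` of the tour `T` of `I_q`: the unit-length vertical edges
on the segments `h_i` and `h'_i`. -/
noncomputable def E4 (p : ℝ) (q : ℕ) : Finset (Sym2 (ℝ × ℝ)) :=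
  (Finset.range q).biUnion fun i =>
    (Finset.range (gapCount p q i)).biUnion fun j =>
      if Even i then
        { s(((0 : ℝ), (j : ℝ) + layerY p q i), ((0 : ℝ), (j : ℝ) + 1 + layerY p q i)),
          s((3 * bigM p q, (j : ℝ) + layerY p q i),
            (3 * bigM p q, (j : ℝ) + 1 + layerY p q i)) }
      else
        { s((bigM p q, (j : ℝ) + layerY p q i), (bigM p q, (j : ℝ) + 1 + layerY p q i)),
          s((2 * bigM p q, (j : ℝ) + layerY p q i),
            (2 * bigM p q, (j : ℝ) + 1 + layerY p q i)) }

/-- The edge set `E₅` of the tour `T` of `I_q`. -/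
noncomputable def E5 (p : ℝ) (q : ℕ) : Finset (Sym2 (ℝ × ℝ)) :=
  {s((bigM p q, (0 : ℝ)), (2 * bigM p q, (0 : ℝ)))}

/-- The edge set `E(T) = E₁ ∪ E₂ ∪ E₃ ∪ E₄ ∪ E₅` of the tour `T` of the
instance `I_q`. -/
noncomputable def ET (p : ℝ) (q : ℕ) : Finset (Sym2 (ℝ × ℝ)) :=
  E1 p q ∪ E2 p q ∪ E3 p q ∪ E4 p q ∪ E5 p q
/-- The length of the closed polygon (cyclic sequence) given by the list `L`. -/
noncomputable def cycleLength (p : ℝ) (L : List (ℝ × ℝ)) : ℝ :=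
  ((L.zip (L.rotate 1)).map fun e => pdist p e.1 e.2).sum

/-- `L` is a tour (Hamiltonian cycle) of the finite point set `V`. -/
def IsTour (V : Finset (ℝ × ℝ)) (L : List (ℝ × ℝ)) : Prop :=
  L.Nodup ∧ L.toFinset = V

/-! Sort the points of `I_q` lexicographically (by `x`, then by `y`) and close the sequence
into a tour. Since `‖·‖_p ≤ ‖·‖_1`, it suffices to bound the horizontal and the vertical
steps separately. The `x`-coordinates increase along the sequence, so the horizontal steps
add up to at most `2 · 3M`, where `M = q^{(p+1)q}`. The vertical steps are charged to the
depth `S − y` of the points below the top layer `y = S = S(q)`: each of the four lines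
`x ∈ {0, M, 2M, 3M}` costs at most `2S`, every other point `v` at most `2(S − v.2)`, and the
first point and the closing edge at most `2S` together.
Off those lines, layer `i` of `V₁` (and of `V₂`) has at most `q^{(p+1)i}` points, all at depth
`S(q) − S(i) ≤ (9/8) q^{(p+1)(q−i)−1}`; so each of the `q − 1` inner layers contributes at
most `9M/(8q)`, and with `S ≤ 9M/(8q)` the tour has length at most
`6M + (4q + 6) · 9M/(8q) ≤ 14M`. -/

open Finset

namespace IqTour

def LexLE (a b : ℝ × ℝ) : Prop := toLex a ≤ toLex b

instance : IsTrans (ℝ × ℝ) LexLE := ⟨fun _ _ _ => le_trans (α := Lex (ℝ × ℝ))⟩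

instance : Std.Antisymm LexLE := ⟨fun _ _ h h' => toLex.injective (le_antisymm h h')⟩

instance : Std.Total LexLE := ⟨fun a b => le_total (toLex a) (toLex b)⟩

noncomputable instance : DecidableRel LexLE := fun a b =>
  inferInstanceAs (Decidable (toLex a ≤ toLex b))

theorem LexLE.fst_le {a b : ℝ × ℝ} (h : LexLE a b) : a.1 ≤ b.1 :=
  (Prod.Lex.toLex_le_toLex'.1 h).1

theorem LexLE.snd_le {a b : ℝ × ℝ} (h : LexLE a b) (hab : a.1 = b.1) : a.2 ≤ b.2 :=
  (Prod.Lex.toLex_le_toLex'.1 h).2 hab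

def pathCost {α : Type*} (d : α → α → ℝ) : List α → ℝ
  | a :: b :: l => d a b + pathCost d (b :: l)
  | _ => 0

theorem pathCost_le_add {α : Type*} {d d₁ d₂ : α → α → ℝ} (h : ∀ a b, d a b ≤ d₁ a b + d₂ a b) :
    ∀ L : List α, pathCost d L ≤ pathCost d₁ L + pathCost d₂ L
  | [] | [_] => by simp [pathCost]
  | a :: b :: l => by
    simp only [pathCost]
    linarith [h a b, pathCost_le_add h (b :: l)]

theorem pathCost_le_of_isChain {α : Type*} {f : α → ℝ} {hi : ℝ} :
    ∀ (a : α) (l : List α), (a :: l).IsChain (fun u v => f u ≤ f v) →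
      (∀ v ∈ a :: l, f v ≤ hi) → pathCost (fun u v => |f u - f v|) (a :: l) ≤ hi - f a
  | a, [], _, h => by simpa [pathCost] using h a (by simp)
  | a, b :: l, hc, h => by
    rw [List.isChain_cons_cons] at hc
    have ih := pathCost_le_of_isChain b l hc.2 fun v hv => h v (List.mem_cons_of_mem a hv)
    simp only [pathCost, abs_sub_comm (f a), abs_of_nonneg (sub_nonneg.2 hc.1)]
    linarith

theorem pdist_le_abs_add_abs {p : ℝ} (hp : 1 ≤ p) (a b : ℝ × ℝ) :
    pdist p a b ≤ |a.1 - b.1| + |a.2 - b.2| :=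
  Real.rpow_add_rpow_le_add (abs_nonneg _) (abs_nonneg _) hp

theorem cycleLength_cons_le (p : ℝ) (a : ℝ × ℝ) (l : List (ℝ × ℝ)) {D : ℝ}
    (hD : ∀ v ∈ a :: l, pdist p v a ≤ D) :
    cycleLength p (a :: l) ≤ pathCost (pdist p) (a :: l) + D := by
  suffices key : ∀ (b : ℝ × ℝ) (l : List (ℝ × ℝ)), (∀ v ∈ b :: l, pdist p v a ≤ D) →
      (((b :: l).zip (l ++ [a])).map fun e => pdist p e.1 e.2).sum ≤
        pathCost (pdist p) (b :: l) + D by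
    simpa [cycleLength] using key a l hD
  intro b l
  induction l generalizing b with
  | nil => intro h; simpa [pathCost] using h b (by simp)
  | cons c l ih =>
    intro h
    have := ih c fun v hv => h v (List.mem_cons_of_mem b hv)
    simp only [List.cons_append, List.zip_cons_cons, List.map_cons, List.sum_cons, pathCost]
    linarith

noncomputable def offColumnDepth (C : Finset ℝ) (S : ℝ) (v : ℝ × ℝ) : ℝ :=
  if v.1 ∈ C then 0 else S - v.2

theorem offColumnDepth_of_mem {C : Finset ℝ} {S : ℝ} {v : ℝ × ℝ} (h : v.1 ∈ C) :
    offColumnDepth C S v = 0 := if_pos h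

theorem offColumnDepth_of_snd_eq {C : Finset ℝ} {S : ℝ} {v : ℝ × ℝ} (h : v.2 = S) :
    offColumnDepth C S v = 0 := by
  simp [offColumnDepth, h]

theorem offColumnDepth_nonneg {C : Finset ℝ} {S : ℝ} {v : ℝ × ℝ} (hv : v.2 ≤ S) :
    0 ≤ offColumnDepth C S v := by
  unfold offColumnDepth; split_ifs <;> linarith

theorem offColumnDepth_le {C : Finset ℝ} {S : ℝ} {v : ℝ × ℝ} (hv : v.2 ≤ S) :
    offColumnDepth C S v ≤ S - v.2 := by
  unfold offColumnDepth; split_ifs <;> linarith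

/- Charging argument: a step between two points of the same column `x ∈ C` is paid by the
drop in depth, every other step `a → b` by `(S - a.2) + (S - b.2)`; so each column is
paid for once, by at most `2S`, when the walk enters it. -/
theorem pathCost_snd_le {C : Finset ℝ} {S : ℝ} :
    ∀ (a : ℝ × ℝ) (l : List (ℝ × ℝ)), (a :: l).IsChain LexLE →
      (∀ v ∈ a :: l, 0 ≤ v.2 ∧ v.2 ≤ S) →
      pathCost (fun u v => |u.2 - v.2|) (a :: l) ≤
        S - a.2 + 2 * S * #{c ∈ C | a.1 < c} + 2 * (l.map (offColumnDepth C S)).sum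
  | a, [], _, h => by
    have ha := h a (by simp)
    have hS : 0 ≤ S := ha.1.trans ha.2
    simp only [pathCost, List.map_nil, List.sum_nil]
    have : 0 ≤ S - a.2 := sub_nonneg.2 ha.2
    positivity
  | a, b :: l, hc, h => by
    rw [List.isChain_cons_cons] at hc
    have ih := pathCost_snd_le (C := C) b l hc.2 fun v hv => h v (List.mem_cons_of_mem a hv)
    have ha := h a (by simp)
    have hb := h b (by simp)
    have hS : 0 ≤ S := hb.1.trans hb.2
    have hstep : |a.2 - b.2| ≤ (S - a.2) + (S - b.2) :=
      abs_sub_le_iff.2 ⟨by linarith, by linarith⟩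
    have hmono : #{c ∈ C | b.1 < c} ≤ #{c ∈ C | a.1 < c} :=
      card_le_card (monotone_filter_right C fun _ _ h => hc.1.fst_le.trans_lt h)
    simp only [pathCost, List.map_cons, List.sum_cons, offColumnDepth]
    rcases hc.1.fst_le.lt_or_eq with hlt | heq
    · split_ifs with hbC
      · have : #{c ∈ C | b.1 < c} + 1 ≤ #{c ∈ C | a.1 < c} := card_lt_card <| by
          refine (ssubset_iff_of_subset (monotone_filter_right C fun _ _ h => hlt.trans h)).2
            ⟨b.1, by simp [hbC, hlt]⟩
        have : S * (#{c ∈ C | b.1 < c} + 1 : ℕ) ≤ S * #{c ∈ C | a.1 < c} :=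
          mul_le_mul_of_nonneg_left (by exact_mod_cast this) hS
        push_cast at this
        linarith
      · have : S * #{c ∈ C | b.1 < c} ≤ S * #{c ∈ C | a.1 < c} :=
          mul_le_mul_of_nonneg_left (by exact_mod_cast hmono) hS
        linarith
    · rw [heq]
      split_ifs with hbC
      · rw [abs_sub_comm, abs_of_nonneg (sub_nonneg.2 (hc.1.snd_le heq))]
        linarith
      · linarith

theorem cycleLength_sort_le {p : ℝ} (hp : 1 ≤ p) (C : Finset ℝ) {V : Finset (ℝ × ℝ)}
    (hne : V.Nonempty) {X S : ℝ} (hV : ∀ v ∈ V, 0 ≤ v.1 ∧ v.1 ≤ X ∧ 0 ≤ v.2 ∧ v.2 ≤ S) :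
    cycleLength p (V.sort LexLE) ≤
      2 * X + (2 + 2 * #C) * S + 2 * ∑ v ∈ V, offColumnDepth C S v := by
  obtain ⟨a, l, hL⟩ := List.exists_cons_of_ne_nil
    (List.ne_nil_of_mem ((mem_sort LexLE).2 hne.choose_spec))
  have hbox : ∀ v ∈ a :: l, 0 ≤ v.1 ∧ v.1 ≤ X ∧ 0 ≤ v.2 ∧ v.2 ≤ S :=
    fun v hv => hV v ((mem_sort LexLE).1 (hL ▸ hv))
  have ha := hbox a List.mem_cons_self
  have hchain : (a :: l).IsChain LexLE := hL ▸ (pairwise_sort _ _).isChain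
  have hx := pathCost_le_of_isChain a l (hchain.imp fun _ _ h => h.fst_le) fun v hv =>
    (hbox v hv).2.1
  have hy := pathCost_snd_le (C := C) a l hchain fun v hv => (hbox v hv).2.2
  have hclose := cycleLength_cons_le p a l (D := X + S) fun v hv =>
    (pdist_le_abs_add_abs hp v a).trans <| add_le_add
      (abs_sub_le_iff.2 ⟨by linarith [hbox v hv], by linarith [hbox v hv]⟩)
      (abs_sub_le_iff.2 ⟨by linarith [hbox v hv], by linarith [hbox v hv]⟩)
  have hpath := pathCost_le_add (pdist_le_abs_add_abs hp) (a :: l)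
  have hcols : S * #{c ∈ C | a.1 < c} ≤ S * #C :=
    mul_le_mul_of_nonneg_left (by exact_mod_cast card_filter_le _ _) (ha.2.2.1.trans ha.2.2.2)
  have hdepth : (l.map (offColumnDepth C S)).sum ≤ ∑ v ∈ V, offColumnDepth C S v := by
    rw [← sort_toFinset V LexLE, List.sum_toFinset _ (sort_nodup V LexLE), hL]
    simpa using offColumnDepth_nonneg ha.2.2.2
  rw [hL]
  linarith

section

variable {p : ℝ} {q : ℕ}

theorem layerY_zero : layerY p q 0 = 0 := by simp [layerY]

theorem layerY_succ (i : ℕ) :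
    layerY p q (i + 1) = layerY p q i + (q : ℝ) ^ ((p + 1) * ((q : ℝ) - i) - 1) :=
  sum_range_succ _ _

theorem layerY_nonneg (i : ℕ) : 0 ≤ layerY p q i :=
  sum_nonneg fun _ _ => Real.rpow_nonneg q.cast_nonneg _

theorem layerY_mono : Monotone (layerY p q) := fun _ _ h =>
  sum_le_sum_of_subset_of_nonneg (range_subset_range.2 h) fun _ _ _ =>
    Real.rpow_nonneg q.cast_nonneg _

theorem layerY_strictMono (hq : q ≠ 0) : StrictMono (layerY p q) :=
  strictMono_nat_of_lt_succ fun i => by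
    rw [layerY_succ]
    exact lt_add_of_pos_right _ (Real.rpow_pos_of_pos (by positivity) _)

theorem layer_gap_eq (hq : q ≠ 0) (i : ℕ) :
    (q : ℝ) ^ ((p + 1) * ((q : ℝ) - i) - 1) = spacing p q i / q :=
  Real.rpow_sub_one (by positivity) _

theorem bigM_nonneg : 0 ≤ bigM p q := Real.rpow_nonneg q.cast_nonneg _

theorem spacing_zero : spacing p q 0 = bigM p q := by simp [spacing, bigM]

theorem spacing_succ (hq : q ≠ 0) (i : ℕ) :
    spacing p q (i + 1) = spacing p q i / (q : ℝ) ^ (p + 1) := by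
  rw [spacing, spacing, ← Real.rpow_sub (by positivity)]
  push_cast
  ring_nf

theorem rpow_mul_spacing (hq : q ≠ 0) (i : ℕ) :
    (q : ℝ) ^ ((p + 1) * i) * spacing p q i = bigM p q := by
  rw [spacing, bigM, ← Real.rpow_add (by positivity)]
  ring_nf

theorem numIntervals_zero : numIntervals p q 0 = 1 := by simp [numIntervals]

theorem numIntervals_le (i : ℕ) : (numIntervals p q i : ℝ) ≤ (q : ℝ) ^ ((p + 1) * i) :=
  Nat.floor_le (Real.rpow_nonneg q.cast_nonneg _)

theorem nine_le_rpow (hp : 1 ≤ p) (hq : 3 ≤ q) : (9 : ℝ) ≤ (q : ℝ) ^ (p + 1) :=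
  calc (9 : ℝ) = 3 ^ (2 : ℝ) := by norm_num
    _ ≤ 3 ^ (p + 1) := Real.rpow_le_rpow_of_exponent_le (by norm_num) (by linarith)
    _ ≤ (q : ℝ) ^ (p + 1) := Real.rpow_le_rpow (by norm_num) (by exact_mod_cast hq) (by linarith)

/- The layer gaps below the top shrink geometrically, by the factor `q^{p+1} ≥ 9`. -/
theorem layerY_top_sub_le (hp : 1 ≤ p) (hq : 3 ≤ q) {i : ℕ} (hi : i ≤ q) :
    layerY p q q - layerY p q i ≤ 9 / (8 * q) * spacing p q i := by
  have hq0 : (0 : ℝ) < q := by positivity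
  induction hi using Nat.decreasingInduction with
  | self => simp only [sub_self]; exact mul_nonneg (by positivity) (Real.rpow_nonneg hq0.le _)
  | of_succ k _ ih =>
    rw [spacing_succ (by omega)] at ih
    rw [layerY_succ, layer_gap_eq (by omega)] at ih
    have h9 := nine_le_rpow hp hq
    have hsp : 0 ≤ spacing p q k := Real.rpow_nonneg hq0.le _
    calc layerY p q q - layerY p q k
        = layerY p q q - (layerY p q k + spacing p q k / q) + spacing p q k / q := by ring
      _ ≤ 9 / (8 * q) * (spacing p q k / 9) + spacing p q k / q := by
        gcongr; exact ih.trans (by gcongr)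
      _ = 9 / (8 * q) * spacing p q k := by field_simp; ring

theorem layerY_le (hp : 1 ≤ p) (hq : 3 ≤ q) : layerY p q q ≤ 9 / (8 * q) * bigM p q := by
  simpa [layerY_zero, spacing_zero] using layerY_top_sub_le hp hq (Nat.zero_le q)

noncomputable def shiftedV1 (p : ℝ) (q : ℕ) (c : ℝ) : Finset (ℝ × ℝ) :=
  (range (q + 1)).biUnion fun i =>
    (range (numIntervals p q i + 1)).image fun j : ℕ =>
      ((j : ℝ) * spacing p q i + c, layerY p q i)

/- In `V1` and `V2` the index `j` is a real number running over the image of `range` under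
the cast (a monadic coercion of `Finset`s); `shiftedV1` indexes by `j : ℕ` instead. -/
theorem V1_eq_shiftedV1 : V1 p q = shiftedV1 p q 0 := by
  simp only [V1, shiftedV1, pure_def, bind_def, sup_singleton_apply, image_image, add_zero]
  rfl

theorem V2_eq_shiftedV1 : V2 p q = shiftedV1 p q (2 * bigM p q) := by
  simp only [V2, shiftedV1, pure_def, bind_def, sup_singleton_apply, image_image]
  rfl

theorem bounds_of_mem_shiftedV1 (hq : q ≠ 0) {c : ℝ} {v : ℝ × ℝ} (hv : v ∈ shiftedV1 p q c) :
    c ≤ v.1 ∧ v.1 ≤ c + bigM p q ∧ 0 ≤ v.2 ∧ v.2 ≤ layerY p q q := by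
  simp only [shiftedV1, mem_biUnion, mem_range, Order.lt_add_one_iff, mem_image] at hv
  obtain ⟨i, hi, j, hj, rfl⟩ := hv
  have hsp : 0 ≤ spacing p q i := Real.rpow_nonneg q.cast_nonneg _
  have hj : (j : ℝ) ≤ numIntervals p q i := by exact_mod_cast hj
  have : (j : ℝ) * spacing p q i ≤ bigM p q := by
    rw [← rpow_mul_spacing hq i]
    exact mul_le_mul_of_nonneg_right (hj.trans (numIntervals_le i)) hsp
  exact ⟨le_add_of_nonneg_left (mul_nonneg j.cast_nonneg hsp), by simp only; linarith,
    layerY_nonneg i, layerY_mono hi⟩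

theorem bounds_of_mem_V3 {v : ℝ × ℝ} (hv : v ∈ V3 p q) :
    bigM p q ≤ v.1 ∧ v.1 ≤ 2 * bigM p q ∧ v.2 = layerY p q q := by
  simp only [V3, pure_def, bind_def, sup_singleton_apply, mem_image, mem_Icc,
    exists_exists_and_eq_and] at hv
  obtain ⟨j, ⟨-, hj⟩, rfl⟩ := hv
  have : (j : ℝ) ≤ bigM p q :=
    (Nat.cast_le.2 (hj.trans (Nat.sub_le _ _))).trans (Nat.floor_le bigM_nonneg)
  exact ⟨by simp only; linarith [j.cast_nonneg (α := ℝ)], by simp only; linarith, rfl⟩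

noncomputable def columns (p : ℝ) (q : ℕ) : Finset ℝ :=
  {0, bigM p q, 2 * bigM p q, 3 * bigM p q}

theorem bounds_of_mem_V4 {v : ℝ × ℝ} (hv : v ∈ V4 p q) :
    v.1 ∈ columns p q ∧ 0 ≤ v.2 ∧ v.2 ≤ layerY p q q := by
  simp only [V4, mem_biUnion, mem_range, mem_Icc] at hv
  obtain ⟨i, hi, j, ⟨-, hj⟩, hv⟩ := hv
  have hy : 0 ≤ (j : ℝ) + layerY p q i ∧ (j : ℝ) + layerY p q i ≤ layerY p q q := by
    have : (j : ℝ) ≤ (q : ℝ) ^ ((p + 1) * ((q : ℝ) - i) - 1) :=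
      (Nat.cast_le.2 (hj.trans (Nat.sub_le _ _))).trans
        (Nat.floor_le (Real.rpow_nonneg q.cast_nonneg _))
    have := layerY_mono (p := p) (q := q) (Nat.succ_le_of_lt hi)
    rw [layerY_succ] at this
    exact ⟨add_nonneg j.cast_nonneg (layerY_nonneg i), by linarith⟩
  split_ifs at hv <;> simp only [mem_insert, mem_singleton] at hv <;>
    rcases hv with rfl | rfl <;> simp [columns, hy]

theorem bounds_of_mem_VIq (hq : q ≠ 0) {v : ℝ × ℝ} (hv : v ∈ VIq p q) :
    0 ≤ v.1 ∧ v.1 ≤ 3 * bigM p q ∧ 0 ≤ v.2 ∧ v.2 ≤ layerY p q q := by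
  have hM : 0 ≤ bigM p q := bigM_nonneg
  simp only [VIq, mem_union] at hv
  rcases hv with ((h | h) | h) | h
  · rw [V1_eq_shiftedV1] at h
    have := bounds_of_mem_shiftedV1 hq h
    exact ⟨this.1, by linarith, this.2.2⟩
  · rw [V2_eq_shiftedV1] at h
    have := bounds_of_mem_shiftedV1 hq h
    exact ⟨by linarith, by linarith, this.2.2⟩
  · have := bounds_of_mem_V3 h
    exact ⟨by linarith, by linarith, this.2.2 ▸ layerY_nonneg q, this.2.2.le⟩
  · have := bounds_of_mem_V4 h
    simp only [columns, mem_insert, mem_singleton] at this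
    obtain ⟨hx | hx | hx | hx, hy⟩ := this <;> rw [hx] <;> exact ⟨by linarith, by linarith, hy⟩

/- Layer `0` consists of the two corners, which lie on columns; layer `q` has depth `0`. -/
theorem sum_offColumnDepth_layer_le (hp : 1 ≤ p) (hq : 3 ≤ q) {C : Finset ℝ} {c : ℝ}
    (hc : c ∈ C) (hcM : c + bigM p q ∈ C) {i : ℕ} (hi : i ≤ q) :
    ∑ j ∈ range (numIntervals p q i + 1),
        offColumnDepth C (layerY p q q) ((j : ℝ) * spacing p q i + c, layerY p q i) ≤
      if i ∈ Ioo 0 q then 9 / (8 * q) * bigM p q else 0 := by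
  rw [sum_range_succ', offColumnDepth_of_mem (by simpa using hc), add_zero]
  rcases Nat.eq_zero_or_pos i with rfl | hi0
  · rw [numIntervals_zero, spacing_zero, if_neg (by simp), sum_range_one,
      offColumnDepth_of_mem (by simpa [add_comm] using hcM)]
  have hsum : ∑ j ∈ range (numIntervals p q i),
        offColumnDepth C (layerY p q q) (((j + 1 : ℕ) : ℝ) * spacing p q i + c, layerY p q i) ≤
      (q : ℝ) ^ ((p + 1) * i) * (layerY p q q - layerY p q i) := by
    refine (sum_le_card_nsmul _ _ (layerY p q q - layerY p q i) fun j _ =>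
      offColumnDepth_le (layerY_mono hi)).trans ?_
    rw [card_range, nsmul_eq_mul]
    exact mul_le_mul_of_nonneg_right (numIntervals_le i) (sub_nonneg.2 (layerY_mono hi))
  split_ifs with hiq
  · refine hsum.trans ?_
    rw [← rpow_mul_spacing (by omega) i, mul_left_comm]
    exact mul_le_mul_of_nonneg_left (layerY_top_sub_le hp hq hi) (Real.rpow_nonneg q.cast_nonneg _)
  · obtain rfl : i = q := by simp only [mem_Ioo] at hiq; omega
    simpa using hsum

theorem sum_offColumnDepth_shiftedV1_le (hp : 1 ≤ p) (hq : 3 ≤ q) {C : Finset ℝ} {c : ℝ}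
    (hc : c ∈ C) (hcM : c + bigM p q ∈ C) :
    ∑ v ∈ shiftedV1 p q c, offColumnDepth C (layerY p q q) v ≤
      (q - 1) * (9 / (8 * q) * bigM p q) := by
  have hdisj : (range (q + 1) : Set ℕ).PairwiseDisjoint fun i =>
      (range (numIntervals p q i + 1)).image fun j : ℕ =>
        ((j : ℝ) * spacing p q i + c, layerY p q i) := by
    intro i _ i' _ hii'
    simp only [Function.onFun, disjoint_left, mem_image]
    rintro _ ⟨j, -, rfl⟩ ⟨j', -, h⟩
    exact hii' ((layerY_strictMono (by omega)).injective (congrArg Prod.snd h)).symm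
  calc ∑ v ∈ shiftedV1 p q c, offColumnDepth C (layerY p q q) v
      ≤ ∑ i ∈ range (q + 1), ∑ j ∈ range (numIntervals p q i + 1),
          offColumnDepth C (layerY p q q) ((j : ℝ) * spacing p q i + c, layerY p q i) := by
        rw [shiftedV1, sum_biUnion hdisj]
        refine sum_le_sum fun i hi => sum_image_le_of_nonneg fun v hv => ?_
        obtain ⟨j, -, rfl⟩ := mem_image.1 hv
        exact offColumnDepth_nonneg (layerY_mono (Nat.lt_succ_iff.1 (mem_range.1 hi)))
    _ ≤ ∑ i ∈ range (q + 1), if i ∈ Ioo 0 q then 9 / (8 * q) * bigM p q else 0 :=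
        sum_le_sum fun i hi =>
          sum_offColumnDepth_layer_le hp hq hc hcM (Nat.lt_succ_iff.1 (mem_range.1 hi))
    _ = (q - 1) * (9 / (8 * q) * bigM p q) := by
        rw [sum_ite_mem, sum_const,
          inter_eq_right.2 fun i hi => mem_range.2 (by simp only [mem_Ioo] at hi; omega),
          Nat.card_Ioo, nsmul_eq_mul, Nat.cast_sub (by omega), Nat.cast_one, Nat.sub_zero]

theorem sum_offColumnDepth_VIq_le (hp : 1 ≤ p) (hq : 3 ≤ q) :
    ∑ v ∈ VIq p q, offColumnDepth (columns p q) (layerY p q q) v ≤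
      2 * ((q - 1) * (9 / (8 * q) * bigM p q)) := by
  have hV1 := sum_offColumnDepth_shiftedV1_le hp hq (C := columns p q) (c := 0)
    (by simp [columns]) (by simp [columns])
  have hV2 := sum_offColumnDepth_shiftedV1_le hp hq (C := columns p q) (c := 2 * bigM p q)
    (by simp [columns]) (by simp [columns, show 2 * bigM p q + bigM p q = 3 * bigM p q by ring])
  rw [← V1_eq_shiftedV1] at hV1
  rw [← V2_eq_shiftedV1] at hV2
  have hvanish : ∀ v ∈ VIq p q, v ∉ V1 p q ∪ V2 p q →
      offColumnDepth (columns p q) (layerY p q q) v = 0 := by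
    intro v hv hv12
    simp only [VIq, mem_union] at hv hv12
    rcases hv with (h12 | h3) | h4
    · exact absurd h12 hv12
    · exact offColumnDepth_of_snd_eq (bounds_of_mem_V3 h3).2.2
    · exact offColumnDepth_of_mem (bounds_of_mem_V4 h4).1
  calc ∑ v ∈ VIq p q, offColumnDepth (columns p q) (layerY p q q) v
      = ∑ v ∈ V1 p q ∪ V2 p q, offColumnDepth (columns p q) (layerY p q q) v :=
        (sum_subset (fun _ hv => mem_union_left _ (mem_union_left _ hv)) hvanish).symm
    _ ≤ ∑ v ∈ V1 p q, offColumnDepth (columns p q) (layerY p q q) v +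
          ∑ v ∈ V2 p q, offColumnDepth (columns p q) (layerY p q q) v := by
        rw [← sum_union_inter]
        refine le_add_of_nonneg_right (sum_nonneg fun v hv => offColumnDepth_nonneg ?_)
        rw [V1_eq_shiftedV1] at hv
        exact (bounds_of_mem_shiftedV1 (by omega) (mem_inter.1 hv).1).2.2.2
    _ ≤ _ := by linarith

theorem origin_mem_VIq : ((0 : ℝ), (0 : ℝ)) ∈ VIq p q := by
  rw [VIq, mem_union, mem_union, mem_union, V1_eq_shiftedV1]
  left; left; left
  exact mem_biUnion.2 ⟨0, by simp, mem_image.2 ⟨0, by simp, by simp [layerY_zero]⟩⟩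

end

end IqTour

open IqTour

theorem optimal_tour_length_upper_bound_general (p : ℝ) (hp : 1 ≤ p)
    (q : ℕ) (hq : 3 ≤ q) :
    ∃ L : List (ℝ × ℝ), IsTour (VIq p q) L ∧ cycleLength p L ≤ 14 * bigM p q := by
  refine ⟨(VIq p q).sort LexLE, ⟨sort_nodup _ _, sort_toFinset _ _⟩, ?_⟩
  have hcycle := cycleLength_sort_le hp (columns p q) ⟨_, origin_mem_VIq (p := p)⟩
    fun v hv => bounds_of_mem_VIq (by omega : q ≠ 0) hv
  have hcols : (2 + 2 * #(columns p q) : ℝ) * layerY p q q ≤ 10 * layerY p q q := by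
    have : #(columns p q) ≤ 4 := card_le_four
    exact mul_le_mul_of_nonneg_right (by norm_cast; omega) (layerY_nonneg q)
  have hdepth := sum_offColumnDepth_VIq_le hp hq
  have hS := layerY_le hp hq
  have hK : (4 * q + 6) * (9 / (8 * q) * bigM p q) ≤ 8 * bigM p q := by
    have hq' : (3 : ℝ) ≤ q := by exact_mod_cast hq
    rw [← sub_nonneg, show 8 * bigM p q - (4 * q + 6) * (9 / (8 * q) * bigM p q) =
      (28 * q - 54) / (8 * q) * bigM p q by field_simp; ring]
    exact mul_nonneg (div_nonneg (by linarith) (by positivity)) bigM_nonneg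
  linarith

/-- For every real `p ≥ 1` and every odd integer `q ≥ 3`, the minimum length
(in the `p`-norm) of a tour of the instance `I_q` is at most `14 · q^{(p+1)q}`:
there is a tour of `I_q` of length at most `14 · q^{(p+1)q}`. -/
theorem optimal_tour_length_upper_bound (p : ℝ) (hp : 1 ≤ p)
    (q : ℕ) (hq : 3 ≤ q) (hodd : Odd q) :
    ∃ L : List (ℝ × ℝ), IsTour (VIq p q) L ∧ cycleLength p L ≤ 14 * bigM p q :=
  optimal_tour_length_upper_bound_general p hp q hq
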